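/- Let Ω, Ω* be compact metric spaces with Ω nonempty, and let c : Ω × Ω* → ℝ be continuous. Let μ₁, μ₂ be Borel probability measures on Ω with μ₁ ≠ μ₂, let ν be a Borel probability measure on Ω*, and for i = 1, 2 let φᵢ ∈ C(Ω, ℝ) be a global minimizer over C(Ω, ℝ) of φ ↦ ∫_{Ω*} φ^c dν − ∫_Ω φ dμᵢ, where φ^c(y) = sup_{x ∈ Ω} (φ(x) − c(x, y)). Suppose at least one of the potentials is unique up to an additive constant (every minimizer for μ₁ has the form φ₁ + C, or every minimizer for μ₂ has the form φ₂ + C). Then sup_{x ∈ Ω} (φ₁(x) − φ₂(x)) = sup_{x ∈ supp((μ₁ − μ₂)⁺)} (φ₁(x) − φ₂(x)), where (μ₁ − μ₂)⁺ is the positive part of the signed measure μ₁ − μ₂ (equivalently, the truncated measure subtraction μ₁ − μ₂ of the two probability measures) and supp denotes the topological support, the set of points all of whose open neighborhoods have positive measure. -/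

import Mathlib

/-!
Let `m` be the supremum of `φ₁ - φ₂` on the support `S` of `(μ₁ - μ₂)⁺`; then `ψ = φ₂ + m` is
still a potential for `μ₂`. Since the `c`-transform is monotone and turns `⊔` into `max`,
`J μ₁ (φ₁ ⊓ ψ) + J μ₂ (φ₁ ⊔ ψ) ≤ J μ₁ φ₁ + J μ₂ ψ + ∫ g d(μ₁ - μ₂)` with `g = φ₁ ⊔ ψ - ψ`.
As `g` vanishes on `S` and `μ₁ ≤ μ₂` off `S`, the last term is `≤ 0`, so `φ₁ ⊓ ψ` and `φ₁ ⊔ ψ`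
are again potentials. By uniqueness one of them is `φ₁ + C`, resp. `ψ + C`; evaluating at a
point of `S` gives `C = 0`, i.e. `φ₁ ≤ ψ` everywhere.
-/

open MeasureTheory

namespace ContinuousMap

variable {X : Type*} [TopologicalSpace X]

lemma integrable_of_compactSpace [CompactSpace X] [MeasurableSpace X] [OpensMeasurableSpace X]
    (f : C(X, ℝ)) (μ : Measure X) [IsFiniteMeasure μ] : Integrable f μ :=
  f.continuous.integrable_of_hasCompactSupport (.of_compactSpace _)

variable {φ ψ : C(X, ℝ)} {C : ℝ} {z : X}

lemma le_of_inf_eq_add_const (h : φ ⊓ ψ = φ + const X C) (hz : φ z ≤ ψ z) : φ ≤ ψ := by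
  have hC : C = 0 := by simpa [hz] using congr($h z)
  intro x
  simpa [hC] using congr($h x)

lemma le_of_sup_eq_add_const (h : φ ⊔ ψ = ψ + const X C) (hz : φ z ≤ ψ z) : φ ≤ ψ := by
  have hC : C = 0 := by simpa [hz] using congr($h z)
  intro x
  simpa [hC] using congr($h x)

end ContinuousMap

namespace MeasureTheory.Measure

variable {X : Type*} [MeasurableSpace X] {μ ν : Measure X}

lemma sub_ne_zero_of_ne [IsProbabilityMeasure μ] [IsProbabilityMeasure ν] (h : μ ≠ ν) :
    μ - ν ≠ 0 := fun h₀ ↦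
  h <| eq_of_le_of_isProbabilityMeasure <| by simpa using sub_le_iff_le_add.mp h₀.le

variable [TopologicalSpace X]

lemma mem_support_iff_forall_isOpen {x : X} :
    x ∈ μ.support ↔ ∀ V : Set X, IsOpen V → x ∈ V → 0 < μ V := by
  simp only [support_eq_forall_isOpen, Set.mem_ofPred_eq]
  exact forall_congr' fun _ ↦ imp.swap

variable [HereditarilyLindelofSpace X] [IsFiniteMeasure μ] [IsFiniteMeasure ν]

lemma restrict_compl_support_sub_le :
    μ.restrict (μ - ν).supportᶜ ≤ ν.restrict (μ - ν).supportᶜ :=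
  calc μ.restrict (μ - ν).supportᶜ ≤ (μ - ν + ν).restrict (μ - ν).supportᶜ :=
        restrict_mono subset_rfl (sub_le_iff_le_add.mp le_rfl)
    _ = ν.restrict (μ - ν).supportᶜ := by
        rw [restrict_add, restrict_eq_zero.mpr measure_compl_support, zero_add]

lemma integral_le_integral_of_eqOn_support_sub {g : X → ℝ} (hg₀ : 0 ≤ g) (hg : Integrable g ν)
    (hgS : Set.EqOn g 0 (μ - ν).support) : ∫ x, g x ∂μ ≤ ∫ x, g x ∂ν := by
  have hcompl : ∀ x ∉ (μ - ν).supportᶜ, g x = 0 := fun _ hx ↦ hgS (Set.not_notMem.mp hx)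
  calc ∫ x, g x ∂μ = ∫ x in (μ - ν).supportᶜ, g x ∂μ :=
        (setIntegral_eq_integral_of_forall_compl_eq_zero hcompl).symm
    _ ≤ ∫ x in (μ - ν).supportᶜ, g x ∂ν :=
        integral_mono_measure restrict_compl_support_sub_le (ae_of_all _ hg₀) hg.restrict
    _ = ∫ x, g x ∂ν := setIntegral_eq_integral_of_forall_compl_eq_zero hcompl

end MeasureTheory.Measure

section Kantorovich

variable {Ω Ωs : Type*} [TopologicalSpace Ω] [CompactSpace Ω] [TopologicalSpace Ωs]
  {c : Ω × Ωs → ℝ}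

noncomputable def cTransform (c : Ω × Ωs → ℝ) (φ : C(Ω, ℝ)) (y : Ωs) : ℝ := ⨆ x, φ x - c (x, y)

lemma bddAbove_range_sub_cost (hc : Continuous c) (φ : C(Ω, ℝ)) (y : Ωs) :
    BddAbove (Set.range fun x ↦ φ x - c (x, y)) :=
  (isCompact_range (φ.continuous.sub (hc.comp (.prodMk_left y)))).bddAbove

lemma cTransform_mono (hc : Continuous c) {φ ψ : C(Ω, ℝ)} (h : φ ≤ ψ) (y : Ωs) :
    cTransform c φ y ≤ cTransform c ψ y :=
  ciSup_mono (bddAbove_range_sub_cost hc ψ y) fun x ↦ sub_le_sub_right (h x) _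

lemma cTransform_sup (hc : Continuous c) (φ ψ : C(Ω, ℝ)) (y : Ωs) :
    cTransform c (φ ⊔ ψ) y = cTransform c φ y ⊔ cTransform c ψ y := by
  simp only [cTransform, ContinuousMap.sup_apply, sup_sub]
  exact ciSup_sup_eq (bddAbove_range_sub_cost hc φ y) (bddAbove_range_sub_cost hc ψ y)

lemma cTransform_inf_add_cTransform_sup_le (hc : Continuous c) (φ ψ : C(Ω, ℝ)) (y : Ωs) :
    cTransform c (φ ⊓ ψ) y + cTransform c (φ ⊔ ψ) y ≤ cTransform c φ y + cTransform c ψ y := by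
  rw [cTransform_sup hc, ← inf_add_sup (cTransform c φ y)]
  gcongr
  exact le_inf (cTransform_mono hc inf_le_left y) (cTransform_mono hc inf_le_right y)

lemma cTransform_add_const [Nonempty Ω] (hc : Continuous c) (φ : C(Ω, ℝ)) (a : ℝ) (y : Ωs) :
    cTransform c (φ + .const Ω a) y = cTransform c φ y + a := by
  simp only [cTransform, ContinuousMap.add_apply, ContinuousMap.const_apply, add_sub_right_comm]
  exact ((OrderIso.addRight a).map_ciSup (bddAbove_range_sub_cost hc φ y)).symm

lemma continuous_cTransform (hc : Continuous c) (φ : C(Ω, ℝ)) : Continuous (cTransform c φ) := by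
  have := isCompact_univ.continuous_sSup (f := fun y x ↦ φ x - c (x, y))
    ((φ.continuous.comp continuous_snd).sub (hc.comp continuous_swap))
  simp_rw [Set.image_univ] at this
  exact this

variable [CompactSpace Ωs] [MeasurableSpace Ωs] [OpensMeasurableSpace Ωs]

lemma integrable_cTransform (hc : Continuous c) (φ : C(Ω, ℝ)) (ν : Measure Ωs)
    [IsFiniteMeasure ν] : Integrable (cTransform c φ) ν :=
  (continuous_cTransform hc φ).integrable_of_hasCompactSupport (.of_compactSpace _)

variable [MeasurableSpace Ω] [OpensMeasurableSpace Ω] {ν : Measure Ωs} {μ μ₁ μ₂ : Measure Ω}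

noncomputable def kantorovichDual (c : Ω × Ωs → ℝ) (ν : Measure Ωs) (μ : Measure Ω)
    (φ : C(Ω, ℝ)) : ℝ :=
  ∫ y, cTransform c φ y ∂ν - ∫ x, φ x ∂μ

def IsKantorovichPotential (c : Ω × Ωs → ℝ) (ν : Measure Ωs) (μ : Measure Ω) (φ : C(Ω, ℝ)) :
    Prop :=
  ∀ ψ, kantorovichDual c ν μ φ ≤ kantorovichDual c ν μ ψ

lemma kantorovichDual_add_const [Nonempty Ω] [IsProbabilityMeasure ν] [IsProbabilityMeasure μ]
    (hc : Continuous c) (φ : C(Ω, ℝ)) (a : ℝ) :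
    kantorovichDual c ν μ (φ + .const Ω a) = kantorovichDual c ν μ φ := by
  simp only [kantorovichDual, cTransform_add_const hc, ContinuousMap.add_apply,
    ContinuousMap.const_apply]
  rw [integral_add (integrable_cTransform hc φ ν) (integrable_const a),
    integral_add (φ.integrable_of_compactSpace μ) (integrable_const a)]
  simp

lemma kantorovichDual_inf_add_kantorovichDual_sup_le [IsFiniteMeasure ν] [IsFiniteMeasure μ₁]
    [IsFiniteMeasure μ₂] (hc : Continuous c) (φ ψ : C(Ω, ℝ)) :
    kantorovichDual c ν μ₁ (φ ⊓ ψ) + kantorovichDual c ν μ₂ (φ ⊔ ψ) ≤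
      kantorovichDual c ν μ₁ φ + kantorovichDual c ν μ₂ ψ +
        (∫ x, (φ ⊔ ψ - ψ) x ∂μ₁ - ∫ x, (φ ⊔ ψ - ψ) x ∂μ₂) := by
  have hT : ∫ y, cTransform c (φ ⊓ ψ) y ∂ν + ∫ y, cTransform c (φ ⊔ ψ) y ∂ν ≤
      ∫ y, cTransform c φ y ∂ν + ∫ y, cTransform c ψ y ∂ν := by
    have hi (χ : C(Ω, ℝ)) : Integrable (cTransform c χ) ν := integrable_cTransform hc χ ν
    rw [← integral_add (hi _) (hi _), ← integral_add (hi _) (hi _)]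
    exact integral_mono ((hi _).add (hi _)) ((hi _).add (hi _))
      (cTransform_inf_add_cTransform_sup_le hc φ ψ)
  have hinf : ∫ x, (φ ⊓ ψ) x ∂μ₁ = ∫ x, φ x ∂μ₁ - ∫ x, (φ ⊔ ψ - ψ) x ∂μ₁ := by
    rw [← integral_sub (φ.integrable_of_compactSpace μ₁)
      ((φ ⊔ ψ - ψ).integrable_of_compactSpace μ₁)]
    congr 1 with x
    simp only [ContinuousMap.sub_apply, ContinuousMap.inf_apply, ContinuousMap.sup_apply]
    linarith [inf_add_sup (φ x) (ψ x)]
  have hsup : ∫ x, (φ ⊔ ψ) x ∂μ₂ = ∫ x, ψ x ∂μ₂ + ∫ x, (φ ⊔ ψ - ψ) x ∂μ₂ := by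
    rw [← integral_add (ψ.integrable_of_compactSpace μ₂)
      ((φ ⊔ ψ - ψ).integrable_of_compactSpace μ₂)]
    simp only [ContinuousMap.sub_apply, add_sub_cancel]
  simp only [kantorovichDual]
  linarith

lemma IsKantorovichPotential.add_const [Nonempty Ω] [IsProbabilityMeasure ν]
    [IsProbabilityMeasure μ] (hc : Continuous c) {φ : C(Ω, ℝ)}
    (hφ : IsKantorovichPotential c ν μ φ) (a : ℝ) :
    IsKantorovichPotential c ν μ (φ + .const Ω a) := by
  simpa only [IsKantorovichPotential, kantorovichDual_add_const hc] using hφ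

lemma IsKantorovichPotential.inf_sup [IsFiniteMeasure ν] [IsFiniteMeasure μ₁]
    [IsFiniteMeasure μ₂] (hc : Continuous c) {φ ψ : C(Ω, ℝ)}
    (hφ : IsKantorovichPotential c ν μ₁ φ) (hψ : IsKantorovichPotential c ν μ₂ ψ)
    (hgap : ∫ x, (φ ⊔ ψ - ψ) x ∂μ₁ ≤ ∫ x, (φ ⊔ ψ - ψ) x ∂μ₂) :
    IsKantorovichPotential c ν μ₁ (φ ⊓ ψ) ∧ IsKantorovichPotential c ν μ₂ (φ ⊔ ψ) := by
  have h := kantorovichDual_inf_add_kantorovichDual_sup_le (ν := ν) (μ₁ := μ₁) (μ₂ := μ₂) hc φ ψ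
  exact ⟨fun χ ↦ by linarith [hφ χ, hψ (φ ⊔ ψ)], fun χ ↦ by linarith [hψ χ, hφ (φ ⊓ ψ)]⟩

variable [HereditarilyLindelofSpace Ω] {φ₁ φ₂ : C(Ω, ℝ)}

theorem IsKantorovichPotential.le_add_of_forall_mem_support [IsProbabilityMeasure ν]
    [IsFiniteMeasure μ₁] [IsProbabilityMeasure μ₂] (hc : Continuous c)
    (h₁ : IsKantorovichPotential c ν μ₁ φ₁) (h₂ : IsKantorovichPotential c ν μ₂ φ₂)
    (huniq : (∀ ψ, IsKantorovichPotential c ν μ₁ ψ → ∃ C, ψ = φ₁ + .const Ω C) ∨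
      (∀ ψ, IsKantorovichPotential c ν μ₂ ψ → ∃ C, ψ = φ₂ + .const Ω C))
    (hS : (μ₁ - μ₂).support.Nonempty) {m : ℝ} (hm : ∀ z ∈ (μ₁ - μ₂).support, φ₁ z ≤ φ₂ z + m)
    (x : Ω) : φ₁ x ≤ φ₂ x + m := by
  obtain ⟨z₀, hz₀⟩ := hS
  have : Nonempty Ω := ⟨z₀⟩
  set ψ := φ₂ + ContinuousMap.const Ω m
  have hgap : ∫ x, (φ₁ ⊔ ψ - ψ) x ∂μ₁ ≤ ∫ x, (φ₁ ⊔ ψ - ψ) x ∂μ₂ :=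
    Measure.integral_le_integral_of_eqOn_support_sub (fun _ ↦ by simp)
      ((φ₁ ⊔ ψ - ψ).integrable_of_compactSpace μ₂) (fun z hz ↦ by simp [ψ, hm z hz])
  obtain ⟨hinf, hsup⟩ := h₁.inf_sup hc (h₂.add_const hc m) hgap
  have hle : φ₁ ≤ ψ := by
    rcases huniq with hu | hu
    · obtain ⟨C, hC⟩ := hu _ hinf
      exact ContinuousMap.le_of_inf_eq_add_const hC (hm z₀ hz₀)
    · obtain ⟨C, hC⟩ := hu _ hsup
      refine ContinuousMap.le_of_sup_eq_add_const (C := C - m) ?_ (hm z₀ hz₀)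
      rw [hC]
      ext x
      simp [ψ]
  exact hle x

end Kantorovich

theorem maximum_principle_kantorovich_potentials_general
    {Ω Ωs : Type*} [MetricSpace Ω] [CompactSpace Ω]
    [MeasurableSpace Ω] [BorelSpace Ω]
    [MetricSpace Ωs] [CompactSpace Ωs] [MeasurableSpace Ωs] [BorelSpace Ωs]
    (c : Ω × Ωs → ℝ) (hc : Continuous c)
    (μ₁ μ₂ : Measure Ω) [IsProbabilityMeasure μ₁] [IsProbabilityMeasure μ₂]
    (hne : μ₁ ≠ μ₂)
    (ν : Measure Ωs) [IsProbabilityMeasure ν]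
    (J : Measure Ω → C(Ω, ℝ) → ℝ)
    (hJ : ∀ (μ : Measure Ω) (φ : C(Ω, ℝ)),
      J μ φ = ∫ y, (⨆ x : Ω, (φ x - c (x, y))) ∂ν - ∫ x, φ x ∂μ)
    (φ₁ φ₂ : C(Ω, ℝ))
    (h₁ : ∀ ψ : C(Ω, ℝ), J μ₁ φ₁ ≤ J μ₁ ψ)
    (h₂ : ∀ ψ : C(Ω, ℝ), J μ₂ φ₂ ≤ J μ₂ ψ)
    (huniq :
      (∀ ψ : C(Ω, ℝ), (∀ χ : C(Ω, ℝ), J μ₁ ψ ≤ J μ₁ χ) →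
        ∃ C : ℝ, ψ = φ₁ + ContinuousMap.const Ω C) ∨
      (∀ ψ : C(Ω, ℝ), (∀ χ : C(Ω, ℝ), J μ₂ ψ ≤ J μ₂ χ) →
        ∃ C : ℝ, ψ = φ₂ + ContinuousMap.const Ω C)) :
    (⨆ x : Ω, (φ₁ x - φ₂ x)) =
      ⨆ x : {x : Ω // ∀ V : Set Ω, IsOpen V → x ∈ V → 0 < (μ₁ - μ₂) V},
        (φ₁ x.1 - φ₂ x.1) := by
  obtain rfl : J = kantorovichDual c ν := funext₂ hJ
  obtain ⟨z₀, hz₀⟩ := Measure.nonempty_support (Measure.sub_ne_zero_of_ne hne)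
  have : Nonempty Ω := ⟨z₀⟩
  have : Nonempty {x : Ω // ∀ V : Set Ω, IsOpen V → x ∈ V → 0 < (μ₁ - μ₂) V} :=
    ⟨⟨z₀, Measure.mem_support_iff_forall_isOpen.mp hz₀⟩⟩
  have hbdd : BddAbove (Set.range fun x ↦ φ₁ x - φ₂ x) :=
    (isCompact_range (φ₁ - φ₂).continuous).bddAbove
  refine le_antisymm (ciSup_le fun x ↦ sub_le_iff_le_add'.2 ?_)
    (ciSup_le fun z ↦ le_ciSup hbdd z.1)
  refine IsKantorovichPotential.le_add_of_forall_mem_support hc h₁ h₂ huniq ⟨z₀, hz₀⟩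
    (fun z hz ↦ ?_) x
  exact sub_le_iff_le_add'.1 <| le_ciSup (hbdd.mono (Set.range_comp_subset_range Subtype.val _))
    ⟨z, Measure.mem_support_iff_forall_isOpen.mp hz⟩

/-- Maximum principle for Kantorovich potentials: the supremum
of `φ₁ − φ₂` over `Ω` is attained on the support of `(μ₁ − μ₂)⁺`, the
truncated measure subtraction. -/
theorem maximum_principle_kantorovich_potentials
    {Ω Ωs : Type*} [MetricSpace Ω] [CompactSpace Ω] [Nonempty Ω]
    [MeasurableSpace Ω] [BorelSpace Ω]
    [MetricSpace Ωs] [CompactSpace Ωs] [MeasurableSpace Ωs] [BorelSpace Ωs]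
    (c : Ω × Ωs → ℝ) (hc : Continuous c)
    (μ₁ μ₂ : Measure Ω) [IsProbabilityMeasure μ₁] [IsProbabilityMeasure μ₂]
    (hne : μ₁ ≠ μ₂)
    (ν : Measure Ωs) [IsProbabilityMeasure ν]
    (J : Measure Ω → C(Ω, ℝ) → ℝ)
    (hJ : ∀ (μ : Measure Ω) (φ : C(Ω, ℝ)),
      J μ φ = ∫ y, (⨆ x : Ω, (φ x - c (x, y))) ∂ν - ∫ x, φ x ∂μ)
    (φ₁ φ₂ : C(Ω, ℝ))
    (h₁ : ∀ ψ : C(Ω, ℝ), J μ₁ φ₁ ≤ J μ₁ ψ)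
    (h₂ : ∀ ψ : C(Ω, ℝ), J μ₂ φ₂ ≤ J μ₂ ψ)
    (huniq :
      (∀ ψ : C(Ω, ℝ), (∀ χ : C(Ω, ℝ), J μ₁ ψ ≤ J μ₁ χ) →
        ∃ C : ℝ, ψ = φ₁ + ContinuousMap.const Ω C) ∨
      (∀ ψ : C(Ω, ℝ), (∀ χ : C(Ω, ℝ), J μ₂ ψ ≤ J μ₂ χ) →
        ∃ C : ℝ, ψ = φ₂ + ContinuousMap.const Ω C)) :
    (⨆ x : Ω, (φ₁ x - φ₂ x)) =
      ⨆ x : {x : Ω // ∀ V : Set Ω, IsOpen V → x ∈ V → 0 < (μ₁ - μ₂) V},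
        (φ₁ x.1 - φ₂ x.1) :=
  maximum_principle_kantorovich_potentials_general c hc μ₁ μ₂ hne ν J hJ φ₁ φ₂ h₁ h₂ huniq
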